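/- The fixed locus of the involution η on (W × W*)//ℂ* described in the Segre-cone coordinates u_{ij} = x_i y_j by the equations u_{11}=u_{22}, u_{33}=u_{44}, u_{13}=u_{42}, u_{14}=u_{32}, u_{23}=u_{41}, u_{24}=u_{31} (inside the rank-≤1 matrix cone u_{ij}u_{kl}=u_{kj}u_{il}) is isomorphic to the affine cone over the Veronese v_2(P^3) ⊂ P^9, i.e. to ℂ^4/±1. -/
import Mathlib


/-- The involution of indices exchanging 1 ↔ 2 and 3 ↔ 4 (coming from τ). -/
def tauIdx : Fin 4 → Fin 4 := ![1, 0, 3, 2]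

/-- The fixed locus of η on (W × W*)//ℂ*: points u = (u_{ij}) of the Segre cone
(u_{ij}u_{kl} = u_{kj}u_{il}, i.e. rank ≤ 1) satisfying
u₁₁ = u₂₂, u₃₃ = u₄₄, u₁₃ = u₄₂, u₁₄ = u₃₂, u₂₃ = u₄₁, u₂₄ = u₃₁,
that is, u_{i,σ(j)} = u_{j,σ(i)} for the swap σ = (12)(34). -/
def etaFixedLocus : Set (Matrix (Fin 4) (Fin 4) ℂ) :=
  { u | (∀ i j k l : Fin 4, u i j * u k l = u k j * u i l) ∧
        (∀ i j : Fin 4, u i (tauIdx j) = u j (tauIdx i)) }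

/-- The 2:1 parametrization ℂ⁴ → etaFixedLocus, w ↦ (w_i w_{σ(j)}). -/
def veroneseParam (w : Fin 4 → ℂ) : Matrix (Fin 4) (Fin 4) ℂ :=
  fun i j => w i * w (tauIdx j)

lemma tau_tau : ∀ j, tauIdx (tauIdx j) = j := by decide

/-- outer products determine the vector up to sign -/
lemma outer_sign (w w' : Fin 4 → ℂ) (h : ∀ i j, w i * w j = w' i * w' j) :
    w' = w ∨ w' = -w := by
  by_cases hw : w = 0
  · left
    funext i
    have := (h i i).symm
    rw [hw] at this ⊢
    simpa using mul_self_eq_zero.mp (by simpa using this)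
  · obtain ⟨a, ha⟩ := Function.ne_iff.mp hw
    have hsq : w' a * w' a = w a * w a := (h a a).symm
    rcases mul_self_eq_mul_self_iff.mp hsq with hpa | hma
    · left
      funext i
      have hi := h i a
      rw [hpa] at hi
      exact mul_right_cancel₀ ha hi.symm
    · right
      funext i
      have hi := h i a
      rw [hma] at hi
      have h2 : -(w' i) * w a = w i * w a := by linear_combination -hi
      have h3 := mul_right_cancel₀ ha h2
      simp [← h3]

/-- symmetric rank-one matrices factor -/
lemma sym_rank_one (v : Fin 4 → Fin 4 → ℂ)
    (hrk : ∀ i j k l, v i j * v k l = v k j * v i l)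
    (hsym : ∀ i j, v i j = v j i) :
    ∃ w : Fin 4 → ℂ, ∀ i j, w i * w j = v i j := by
  by_cases hv : ∀ i j, v i j = 0
  · exact ⟨0, fun i j => by simp [hv i j]⟩
  · push_neg at hv
    obtain ⟨i, j, hij⟩ := hv
    -- some diagonal entry is nonzero
    have hd : v i i ≠ 0 ∨ v j j ≠ 0 := by
      by_contra hc
      push_neg at hc
      have : v i j * v j i = v j j * v i i := hrk i j j i
      rw [hc.1, hc.2, ← hsym i j] at this
      exact hij (mul_self_eq_zero.mp (by simpa using this))
    obtain ⟨a, ha⟩ : ∃ a, v a a ≠ 0 := by rcases hd with h | h; exacts [⟨i, h⟩, ⟨j, h⟩]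
    obtain ⟨s, hs⟩ := IsAlgClosed.exists_pow_nat_eq (v a a) (n := 2) (by norm_num)
    have hs' : s * s = v a a := by rw [← hs]; ring
    have hsne : s ≠ 0 := by
      intro h0; rw [h0] at hs'; simp at hs'; exact ha hs'.symm
    refine ⟨fun i => v i a / s, fun i j => ?_⟩
    have key : v i j * v a a = v j a * v i a := by
      have := hrk i j a a
      rw [hsym a j] at this
      exact this
    rw [div_mul_div_comm, hs', div_eq_iff ha]
    linear_combination -key

/-- The fixed locus of η on the Segre cone (W × W*)//ℂ* is the affine cone over
the Veronese v₂(P³) ⊂ P⁹, i.e. it is the image of ℂ⁴ under w ↦ (w_i w_{σ(j)}),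
and this parametrization identifies exactly w and -w: the locus is ℂ⁴/±1. -/
theorem stmt_7 :
    etaFixedLocus = Set.range veroneseParam ∧
    (∀ w w' : Fin 4 → ℂ,
      veroneseParam w = veroneseParam w' ↔ w' = w ∨ w' = -w) := by
  constructor
  · ext u
    simp only [Set.mem_range]
    constructor
    · rintro ⟨hrk, hsym⟩
      set v : Fin 4 → Fin 4 → ℂ := fun i j => u i (tauIdx j) with hvdef
      have hvrk : ∀ i j k l, v i j * v k l = v k j * v i l := fun i j k l =>
        hrk i (tauIdx j) k (tauIdx l)
      have hvsym : ∀ i j, v i j = v j i := fun i j => hsym i j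
      obtain ⟨w, hw⟩ := sym_rank_one v hvrk hvsym
      refine ⟨w, ?_⟩
      funext i j
      have := hw i (tauIdx j)
      simpa [veroneseParam, hvdef, tau_tau] using this
    · rintro ⟨w, rfl⟩
      refine ⟨fun i j k l => by simp [veroneseParam]; ring, fun i j => ?_⟩
      simp [veroneseParam, tau_tau]
      ring
  · intro w w'
    constructor
    · intro h
      have h' : ∀ i j, w i * w j = w' i * w' j := fun i j => by
        have := congrFun (congrFun h i) (tauIdx j)
        simpa [veroneseParam, tau_tau] using this
      exact outer_sign w w' h'
    · rintro (rfl | rfl)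
      · rfl
      · funext i j
        simp [veroneseParam]
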